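/- Let P be the initial semi-theory. For every functor X : P → SSet and every strict P-algebra Z there is an isomorphism of simplicial sets Map_P(X, Z) ≅ Map(X[1], Z[1]), where the right-hand side is the internal mapping complex of simplicial sets, and this isomorphism is natural in X and Z. -/

import Mathlib

open CategoryTheory Limits Topology Topology.Homotopy

noncomputable section

namespace SemiThPaper

/-! ### Weak homotopy equivalences -/

/-- The map induced by a continuous map on homotopy "groups" (sets for `N = Fin 0`). -/
def HomotopyGroup.map {X Y : Type} [TopologicalSpace X] [TopologicalSpace Y]
    (f : C(X, Y)) (N : Type) (x : X) :
    HomotopyGroup N X x → HomotopyGroup N Y (f x) :=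
  Quotient.map
    (fun g => ⟨f.comp g.1, fun y hy => by
      simp only [ContinuousMap.comp_apply]
      rw [g.2 y hy]⟩)
    (fun g h H => H.elim fun H => ⟨H.compContinuousMap f⟩)

/-- The map induced on path components. -/
def ZerothHomotopy.map {X Y : Type} [TopologicalSpace X] [TopologicalSpace Y]
    (f : C(X, Y)) : ZerothHomotopy X → ZerothHomotopy Y :=
  Quotient.map f (fun _ _ h => h.elim fun γ => ⟨γ.map f.continuous⟩)

/-- A weak homotopy equivalence of topological spaces: a continuous map inducing a
bijection on path components and on all homotopy groups at all basepoints. -/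
def IsWeakHomotopyEquiv {X Y : TopCat} (f : X ⟶ Y) : Prop :=
  Function.Bijective (ZerothHomotopy.map (f.hom : C(X, Y))) ∧
    ∀ (n : ℕ) (x : X), Function.Bijective (HomotopyGroup.map (f.hom : C(X, Y)) (Fin n) x)

/-- A weak equivalence of simplicial sets: a map whose geometric realization is a
weak homotopy equivalence. -/
def WeakEquiv {A B : SSet} (f : A ⟶ B) : Prop :=
  IsWeakHomotopyEquiv (SSet.toTop.map f)


/-! ### Semi-theories -/

/-- The objects `[1], [2], [3], …` of a semi-theory, indexed by positive integers. -/
@[ext]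
structure Ob : Type where
  val : ℕ+

instance : Coe ℕ+ Ob := ⟨Ob.mk⟩

/-- An (unpointed) semi-theory: a category with objects `[1], [2], …`
together with distinguished projection morphisms `p^n_k : [n] ⟶ [1]`, where `p^1_1 = 𝟙 [1]`. -/
structure SemiTheory : Type 1 where
  cat : Category.{0, 0} Ob
  proj : ∀ n : ℕ+, Fin n → @Quiver.Hom Ob cat.toCategoryStruct.toQuiver ⟨n⟩ ⟨1⟩
  proj_one : proj 1 ⟨0, Nat.one_pos⟩ = cat.toCategoryStruct.id ⟨1⟩

/-- The category of diagrams of simplicial sets over (the underlying category of)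
a semi-theory. -/
abbrev SemiTheory.Diag (S : SemiTheory) : Type 1 :=
  @CategoryTheory.Functor Ob S.cat SSet _

/-- The `n`-fold levelwise power of a simplicial set. -/
@[simps]
def finPow (n : ℕ+) (A : SSet) : SSet where
  obj m := Fin n → A.obj m
  map θ := ↾fun a k => A.map θ (a k)

/-- The canonical comparison map `X[n] ⟶ X[1]^n` of a diagram over a semi-theory,
whose components are induced by the projections. -/
def SemiTheory.projFan (S : SemiTheory) (X : S.Diag) (n : ℕ+) :
    (letI := S.cat; (X.obj ⟨n⟩ ⟶ finPow n (X.obj ⟨1⟩))) :=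
  letI := S.cat
  { app := fun m => ↾fun a k => (X.map (S.proj n k)).app m a
    naturality := fun m m' θ => by
      apply ConcreteCategory.hom_ext; intro a
      funext k
      exact ConcreteCategory.congr_hom ((X.map (S.proj n k)).naturality θ) a }

/-- A strict algebra over a semi-theory: the comparison maps `X[n] ⟶ X[1]^n` are
isomorphisms for all `n > 1`. -/
def SemiTheory.IsStrictAlgebra (S : SemiTheory) (X : S.Diag) : Prop :=
  ∀ n : ℕ+, 1 < (n : ℕ) → IsIso (S.projFan X n)

/-- A homotopy algebra over a semi-theory: the comparison maps `X[n] ⟶ X[1]^n` are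
weak equivalences of simplicial sets for all `n > 1`. -/
def SemiTheory.IsHomotopyAlgebra (S : SemiTheory) (X : S.Diag) : Prop :=
  ∀ n : ℕ+, 1 < (n : ℕ) → WeakEquiv (S.projFan X n)

/-- A semi-theory is an algebraic theory if composition with the projections induces
bijections `Hom([m],[n]) ≅ Hom([m],[1])^n` for all `m` and all `n > 1`. -/
def SemiTheory.IsAlgebraic (S : SemiTheory) : Prop :=
  letI := S.cat
  ∀ (m n : ℕ+), 1 < (n : ℕ) →
    Function.Bijective (fun (f : (⟨m⟩ : Ob) ⟶ ⟨n⟩) (k : Fin n) => f ≫ S.proj n k)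

/-- The comparison map `X[n] ⟶ X[1]^n` for a diagram of simplicial sets over any
category equipped with objects `[n]` and projection morphisms. -/
def projFanAt {C : Type} [Category.{0} C] (o : ℕ+ → C) (p : ∀ n : ℕ+, Fin n → (o n ⟶ o 1))
    (X : C ⥤ SSet) (n : ℕ+) : X.obj (o n) ⟶ finPow n (X.obj (o 1)) where
  app m := ↾fun a k => (X.map (p n k)).app m a
  naturality m m' θ := by
    apply ConcreteCategory.hom_ext; intro a
    funext k
    exact ConcreteCategory.congr_hom ((X.map (p n k)).naturality θ) a

/-- Strictness of a diagram with respect to given objects and projections. -/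
def IsStrictAt {C : Type} [Category.{0} C] (o : ℕ+ → C)
    (p : ∀ n : ℕ+, Fin n → (o n ⟶ o 1)) (X : C ⥤ SSet) : Prop :=
  ∀ n : ℕ+, 1 < (n : ℕ) → IsIso (projFanAt o p X n)

/-- The homotopy-algebra condition for a diagram with respect to given objects
and projections. -/
def IsHomotopyAt {C : Type} [Category.{0} C] (o : ℕ+ → C)
    (p : ∀ n : ℕ+, Fin n → (o n ⟶ o 1)) (X : C ⥤ SSet) : Prop :=
  ∀ n : ℕ+, 1 < (n : ℕ) → WeakEquiv (projFanAt o p X n)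

/-! ### Free semi-theories -/

/-- Generating data for a free semi-theory: a family of free generators that are
not projections (the projections are added separately as free generators). -/
structure GenData : Type 1 where
  gen : ℕ+ → ℕ+ → Type

/-- The generating quiver of the free semi-theory on `G`: the generators of `G`
together with projection arrows `p^n_k : [n] → [1]` for `n > 1`
(the projection `p^1_1` is the identity, i.e. the empty path). -/
inductive Arr (G : GenData) : ℕ+ → ℕ+ → Type
  | gen {a b : ℕ+} : G.gen a b → Arr G a b
  | proj {n : ℕ+} (h : 1 < (n : ℕ)) (k : Fin n) : Arr G n 1

/-- The object type of the free semi-theory on `G` (a copy of `Ob`). -/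
def FreeOb (G : GenData) : Type := Ob

instance freeQuiver (G : GenData) : Quiver (FreeOb G) :=
  ⟨fun a b => Arr G (Ob.val a) (Ob.val b)⟩

/-- The free semi-theory on `G`, as a category: the paths category on the
generating quiver. -/
abbrev FreeST (G : GenData) := CategoryTheory.Paths (FreeOb G)

/-- The object `[n]` of the free semi-theory. -/
def FreeST.of (G : GenData) (n : ℕ+) : FreeST G := (⟨n⟩ : Ob)

/-- The generating projection arrow, as an arrow of the generating quiver. -/
def projArr (G : GenData) {n : ℕ+} (h : 1 < (n : ℕ)) (k : Fin n) :
    @Quiver.Hom (FreeOb G) _ (FreeST.of G n) (FreeST.of G 1) := Arr.proj h k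

/-- The projection `p^n_k` in the free semi-theory. -/
def projPath (G : GenData) (n : ℕ+) (k : Fin n) : FreeST.of G n ⟶ FreeST.of G 1 :=
  if h : 1 < (n : ℕ) then (projArr G h k).toPath
  else eqToHom (congrArg (FreeST.of G)
    (PNat.coe_injective (by
      rw [PNat.one_coe]
      exact le_antisymm (not_lt.1 h) n.pos)))

/-- The free semi-theory on `G`, as a semi-theory. -/
def freeSemiTheory (G : GenData) : SemiTheory where
  cat := inferInstanceAs (Category (FreeST G))
  proj n k := projPath G n k
  proj_one := by
    show projPath G 1 ⟨0, Nat.one_pos⟩ = _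
    rw [projPath, dif_neg (by norm_num)]
    rfl

/-- The initial semi-theory `P` has no generators besides the projections. -/
def emptyGen : GenData := ⟨fun _ _ => PEmpty⟩

/-- The underlying category of the initial semi-theory `P`. -/
abbrev PCat := FreeST emptyGen

/-- The initial semi-theory `P`: its only non-identity morphisms are the projections. -/
def PTheory : SemiTheory := freeSemiTheory emptyGen

/-- The action of the unique morphism of semi-theories `P ⟶ C` on generating arrows. -/
def jArr (G : GenData) : ∀ {a b : ℕ+}, Arr emptyGen a b →
    @Quiver.Path (FreeOb G) _ ((⟨a⟩ : Ob) : FreeST G) ((⟨b⟩ : Ob) : FreeST G)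
  | _, _, .gen α => α.elim
  | _, _, .proj h k => (projArr G h k).toPath

/-- The unique morphism of semi-theories `P ⟶ C` into a free semi-theory. -/
def Jfree (G : GenData) : PCat ⥤ FreeST G :=
  Paths.lift
    { obj := fun n => (n : FreeST G)
      map := fun {a b} e => jArr G e }

/-! ### The completion of a free semi-theory -/

/-- Trees representing the morphisms `[n] ⟶ [1]` of the completion `C̄` of a free
semi-theory: either a single edge labelled by a projection `p^n_k`, or a tree whose
lowest edge is labelled by a component `α_i` of a non-projection generator
`α : [m] ⟶ [r]` and which is obtained by grafting `m` smaller trees. -/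
inductive CTree (G : GenData) (n : ℕ+) : Type
  | proj (k : Fin n) : CTree G n
  | node {m r : ℕ+} (α : G.gen m r) (i : Fin r) (ts : Fin m → CTree G n) : CTree G n

/-- Morphisms `[n] ⟶ [m]` in the completion: `m`-tuples of trees. -/
def CompHom (G : GenData) (n m : ℕ+) : Type := Fin m → CTree G n

/-- Grafting: substituting the trees `T k` for the initial edges labelled `p^m_k`. -/
def CTree.graft {G : GenData} {n m : ℕ+} : CTree G m → CompHom G n m → CTree G n
  | .proj k, T => T k
  | .node α i ts, T => .node α i (fun j => (ts j).graft T)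

/-- The identity of the completion. -/
def compId (G : GenData) (n : ℕ+) : CompHom G n n := fun k => .proj k

/-- Composition in the completion, by grafting. -/
def compComp {G : GenData} {a b c : ℕ+} (T : CompHom G a b) (S : CompHom G b c) :
    CompHom G a c :=
  fun j => (S j).graft T

theorem CTree.graft_id {G : GenData} {m : ℕ+} (t : CTree G m) :
    t.graft (compId G m) = t := by
  induction t with
  | proj k => rfl
  | node α i ts ih =>
      simp only [CTree.graft]
      congr 1
      funext j
      exact ih j

theorem CTree.graft_graft {G : GenData} {a b c : ℕ+} (s : CTree G c)
    (U : CompHom G b c) (T : CompHom G a b) :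
    (s.graft U).graft T = s.graft (compComp T U) := by
  induction s with
  | proj k => rfl
  | node α i ts ih =>
      simp only [CTree.graft]
      congr 1
      funext j
      exact ih j

/-- The object type of the completion (a copy of `Ob`). -/
def CompOb (G : GenData) : Type := Ob

/-- The completion `C̄` of a free semi-theory, as a category. -/
instance compCategory (G : GenData) : Category (CompOb G) where
  Hom n m := CompHom G (Ob.val n) (Ob.val m)
  id n := compId G _
  comp f g := compComp f g
  id_comp f := funext fun j => CTree.graft_id _
  comp_id f := rfl
  assoc f g h := funext fun j => (CTree.graft_graft _ _ _).symm

/-- The object `[n]` of the completion. -/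
def CompOb.of (G : GenData) (n : ℕ+) : CompOb G := (⟨n⟩ : Ob)

/-- The projection `p̂^n_k` of the completion: a single edge labelled `p^n_k`. -/
def compProj (G : GenData) (n : ℕ+) (k : Fin n) : CompOb.of G n ⟶ CompOb.of G 1 :=
  fun _ => .proj k

/-- The completion, as a semi-theory. -/
def compSemiTheory (G : GenData) : SemiTheory where
  cat := inferInstanceAs (Category (CompOb G))
  proj n k := compProj G n k
  proj_one := by
    funext i
    have h0 : i = ⟨0, Nat.one_pos⟩ := Fin.ext (Nat.lt_one_iff.mp i.isLt)
    rw [h0]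
    rfl

/-- The completion functor `Φ` on generating arrows. -/
def phiArr (G : GenData) : ∀ {a b : ℕ+}, Arr G a b → CompHom G a b
  | _, _, .gen α => fun i => .node α i (fun k => .proj k)
  | _, _, .proj _ k => fun _ => .proj k

/-- The completion functor `Φ_C : C ⟶ C̄` of a free semi-theory. -/
def phi (G : GenData) : FreeST G ⥤ CompOb G :=
  Paths.lift
    { obj := fun n => (n : CompOb G)
      map := fun {a b} e => phiArr G e }

/-! ### Discrete simplicial sets, products, mapping complexes -/

/-- The discrete simplicial set on a type. -/
@[simps]
def disc (A : Type) : SSet where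
  obj _ := A
  map _ := ↾id

/-- The map of discrete simplicial sets induced by a function. -/
@[simps]
def disc.map {A B : Type} (f : A → B) : disc A ⟶ disc B where
  app _ := ↾f

/-- The diagram of (discrete) simplicial sets corepresented by the object `[n]`
of a semi-theory. -/
def SemiTheory.corep (S : SemiTheory) (n : ℕ+) : S.Diag :=
  letI := S.cat
  { obj := fun m => disc ((⟨n⟩ : Ob) ⟶ m)
    map := fun f => disc.map (fun g => g ≫ f)
    map_id := fun m => by
      apply NatTrans.ext
      funext x; apply ConcreteCategory.hom_ext; intro (g : (⟨n⟩ : Ob) ⟶ m)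
      show g ≫ 𝟙 m = g
      simp
    map_comp := fun f f' => by
      apply NatTrans.ext
      funext x; apply ConcreteCategory.hom_ext; intro (g : (⟨n⟩ : Ob) ⟶ _)
      show g ≫ (_ ≫ _) = _
      rw [← Category.assoc]
      rfl }

/-- Levelwise product of two simplicial sets. -/
@[simps]
def mulC (A K : SSet) : SSet where
  obj m := A.obj m × K.obj m
  map θ := ↾fun p => (A.map θ p.1, K.map θ p.2)
  map_id m := by apply ConcreteCategory.hom_ext; intro p; simp
  map_comp f g := by apply ConcreteCategory.hom_ext; intro p; simp

/-- `f × id` on levelwise products. -/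
@[simps]
def mulC.mapLeft {A B : SSet} (f : A ⟶ B) (K : SSet) : mulC A K ⟶ mulC B K where
  app m := ↾fun p => (f.app m p.1, p.2)
  naturality m m' θ := by
    apply ConcreteCategory.hom_ext; intro p
    simp only [mulC_obj, mulC_map, types_comp_apply]
    exact Prod.ext (ConcreteCategory.congr_hom (f.naturality θ) p.1 :) rfl

/-- `id × g` on levelwise products. -/
@[simps]
def mulC.mapRight (A : SSet) {K L : SSet} (g : K ⟶ L) : mulC A K ⟶ mulC A L where
  app m := ↾fun p => (p.1, g.app m p.2)
  naturality m m' θ := by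
    apply ConcreteCategory.hom_ext; intro p
    simp only [mulC_obj, mulC_map, types_comp_apply]
    exact Prod.ext rfl (ConcreteCategory.congr_hom (g.naturality θ) p.2 :)

theorem mulC.mapRight_id (A K : SSet) : mulC.mapRight A (𝟙 K) = 𝟙 (mulC A K) := by
  apply NatTrans.ext; funext x; apply ConcreteCategory.hom_ext; intro p; rfl

theorem mulC.mapRight_comp (A : SSet) {K L M : SSet} (g : K ⟶ L) (h : L ⟶ M) :
    mulC.mapRight A (g ≫ h) = mulC.mapRight A g ≫ mulC.mapRight A h := by
  apply NatTrans.ext; funext x; apply ConcreteCategory.hom_ext; intro p; rfl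

/-- Naturality, in applied form. -/
theorem natApply {C : Type} [Category C] {X Y : C ⥤ SSet} (f : X ⟶ Y)
    {c c' : C} (φ : c ⟶ c') (x : SimplexCategoryᵒᵖ) (a : (X.obj c).obj x) :
    (f.app c').app x ((X.map φ).app x a) = (Y.map φ).app x ((f.app c).app x a) :=
  ConcreteCategory.congr_hom (NatTrans.congr_app (f.naturality φ) x) a

/-- The objectwise product of a diagram of simplicial sets with a constant
simplicial set. -/
@[simps]
def prodConst {C : Type} [Category C] (X : C ⥤ SSet) (K : SSet) : C ⥤ SSet where
  obj c := mulC (X.obj c) K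
  map f := mulC.mapLeft (X.map f) K
  map_id c := by
    apply NatTrans.ext; funext x; apply ConcreteCategory.hom_ext; intro p
    show ((X.map (𝟙 c)).app x p.1, p.2) = p
    rw [X.map_id]
    rfl
  map_comp f g := by
    apply NatTrans.ext; funext x; apply ConcreteCategory.hom_ext; intro p
    show ((X.map (f ≫ g)).app x p.1, p.2) = _
    rw [X.map_comp]
    rfl

/-- Functoriality of `prodConst` in the diagram variable. -/
@[simps]
def prodConst.mapX {C : Type} [Category C] {X X' : C ⥤ SSet} (f : X ⟶ X') (K : SSet) :
    prodConst X K ⟶ prodConst X' K where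
  app c := mulC.mapLeft (f.app c) K
  naturality c c' φ := by
    apply NatTrans.ext; funext x; apply ConcreteCategory.hom_ext; intro p
    simp only [prodConst_obj, prodConst_map, NatTrans.comp_app, mulC.mapLeft_app,
      types_comp_apply]
    exact Prod.ext (natApply f φ x p.1) rfl

/-- Functoriality of `prodConst` in the constant variable. -/
@[simps]
def prodConst.mapK {C : Type} [Category C] (X : C ⥤ SSet) {K L : SSet} (g : K ⟶ L) :
    prodConst X K ⟶ prodConst X L where
  app c := mulC.mapRight (X.obj c) g
  naturality c c' φ := by
    apply NatTrans.ext; funext x; apply ConcreteCategory.hom_ext; intro p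
    rfl

theorem prodConst.mapK_id {C : Type} [Category C] (X : C ⥤ SSet) (K : SSet) :
    prodConst.mapK X (𝟙 K) = 𝟙 (prodConst X K) := by
  apply NatTrans.ext; funext c
  exact mulC.mapRight_id _ _

theorem prodConst.mapK_comp {C : Type} [Category C] (X : C ⥤ SSet) {K L M : SSet}
    (g : K ⟶ L) (h : L ⟶ M) :
    prodConst.mapK X (g ≫ h) = prodConst.mapK X g ≫ prodConst.mapK X h := by
  apply NatTrans.ext; funext c
  exact mulC.mapRight_comp _ _ _

/-- The standard simplex `Δ[k]`, for `k : SimplexCategoryᵒᵖ`. -/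
def stdS (k : SimplexCategoryᵒᵖ) : SSet := SSet.stdSimplex.obj k.unop

/-- Functoriality of the standard simplex (contravariantly in `SimplexCategoryᵒᵖ`). -/
def stdMap {k l : SimplexCategoryᵒᵖ} (θ : k ⟶ l) : stdS l ⟶ stdS k :=
  SSet.stdSimplex.map θ.unop

theorem stdMap_id (k : SimplexCategoryᵒᵖ) : stdMap (𝟙 k) = 𝟙 (stdS k) :=
  SSet.stdSimplex.map_id _

theorem stdMap_comp {k l m : SimplexCategoryᵒᵖ} (θ : k ⟶ l) (η : l ⟶ m) :
    stdMap (θ ≫ η) = stdMap η ≫ stdMap θ :=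
  SSet.stdSimplex.map_comp _ _

/-- The simplicial mapping complex of two diagrams of simplicial sets: its
`m`-simplices are the natural transformations `X × Δ[m] ⟶ Y`. -/
def MapCx {C : Type} [Category C] (X Y : C ⥤ SSet) : SSet where
  obj m := prodConst X (stdS m) ⟶ Y
  map {m m'} θ := ↾fun t => prodConst.mapK X (stdMap θ) ≫ t
  map_id m := by
    apply ConcreteCategory.hom_ext; intro t
    simp [stdMap_id, prodConst.mapK_id]
  map_comp θ η := by
    apply ConcreteCategory.hom_ext; intro t
    simp [stdMap_comp, prodConst.mapK_comp]

/-- Precomposition on mapping complexes. -/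
def MapCx.pre {C : Type} [Category C] {X X' : C ⥤ SSet} (f : X' ⟶ X) (Y : C ⥤ SSet) :
    MapCx X Y ⟶ MapCx X' Y where
  app m := ↾fun t => prodConst.mapX f (stdS m) ≫ t
  naturality m m' θ := by
    apply ConcreteCategory.hom_ext; intro t
    rfl

/-- Postcomposition on mapping complexes. -/
def MapCx.post {C : Type} [Category C] (X : C ⥤ SSet) {Y Y' : C ⥤ SSet} (g : Y ⟶ Y') :
    MapCx X Y ⟶ MapCx X Y' where
  app m := ↾fun t => t ≫ g
  naturality m m' θ := by
    apply ConcreteCategory.hom_ext; intro t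
    rfl

/-- Restriction of mapping complexes along a functor. -/
def MapCx.whisk {C D : Type} [Category C] [Category D] (F : D ⥤ C) (X Y : C ⥤ SSet) :
    MapCx X Y ⟶ MapCx (F ⋙ X) (F ⋙ Y) where
  app m := ↾fun t =>
    (show prodConst (F ⋙ X) (stdS m) ⟶ F ⋙ Y from CategoryTheory.Functor.whiskerLeft F t)
  naturality m m' θ := by
    apply ConcreteCategory.hom_ext; intro t
    rfl

/-- The simplicial mapping complex of two simplicial sets: its `m`-simplices are
the maps `A × Δ[m] ⟶ B`. -/
def sMap (A B : SSet) : SSet where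
  obj m := mulC A (stdS m) ⟶ B
  map {m m'} θ := ↾fun t => mulC.mapRight A (stdMap θ) ≫ t
  map_id m := by
    apply ConcreteCategory.hom_ext; intro t
    simp [stdMap_id, mulC.mapRight_id]
  map_comp θ η := by
    apply ConcreteCategory.hom_ext; intro t
    simp [stdMap_comp, mulC.mapRight_comp]

/-- Precomposition on simplicial mapping complexes. -/
def sMap.pre {A A' : SSet} (f : A' ⟶ A) (B : SSet) : sMap A B ⟶ sMap A' B where
  app m := ↾fun t => mulC.mapLeft f (stdS m) ≫ t
  naturality m m' θ := by
    apply ConcreteCategory.hom_ext; intro t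
    rfl

/-- Postcomposition on simplicial mapping complexes. -/
def sMap.post (A : SSet) {B B' : SSet} (g : B ⟶ B') : sMap A B ⟶ sMap A B' where
  app m := ↾fun t => t ≫ g
  naturality m m' θ := by
    apply ConcreteCategory.hom_ext; intro t
    rfl

/-! A strict `P`-algebra `Z` has `Z[n] ≅ Z[1]ⁿ` through the projections, so by naturality
along the projections a map `W ⟶ Z` of `P`-diagrams is determined by its component at `[1]`:
its component at `[n]` is `(t₁ ∘ W(p^n_k))ₖ` followed by the inverse comparison map.
Conversely, since the only generating arrows of `P` are the projections, this formula
defines a natural transformation for every `t₁ : W[1] ⟶ Z[1]`. Hence `Hom_P(W, Z) ≅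
Hom(W[1], Z[1])` by evaluation at `[1]`; taking `W = X × Δ[m]` gives the isomorphism of
mapping complexes levelwise, and naturality in `X`, `Z` and `m` holds on the nose. -/

namespace finPow

variable {A B : SSet} {n : ℕ+}

def lift (f : Fin n → (A ⟶ B)) : A ⟶ finPow n B where
  app m := ↾fun a k => (f k).app m a
  naturality m m' θ := by
    apply ConcreteCategory.hom_ext; intro a
    funext k
    exact ConcreteCategory.congr_hom ((f k).naturality θ) a

def eval (B : SSet) (n : ℕ+) (k : Fin n) : finPow n B ⟶ B where
  app _ := ↾fun a => a k
  naturality _ _ _ := rfl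

theorem lift_eval (f : Fin n → (A ⟶ B)) (k : Fin n) : lift f ≫ eval B n k = f k := rfl

theorem hom_ext {g h : A ⟶ finPow n B} (H : ∀ k, g ≫ eval B n k = h ≫ eval B n k) :
    g = h := by
  ext m a
  funext k
  exact ConcreteCategory.congr_hom (NatTrans.congr_app (H k) m) a

end finPow

section ProjFan

variable {C : Type} [Category.{0} C] {o : ℕ+ → C} {p : ∀ n : ℕ+, Fin n → (o n ⟶ o 1)}

theorem projFanAt_eq_lift (X : C ⥤ SSet) (n : ℕ+) :
    projFanAt o p X n = finPow.lift fun k => X.map (p n k) := rfl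

theorem isIso_projFanAt_one (hp : ∀ k, p 1 k = 𝟙 (o 1)) (X : C ⥤ SSet) :
    IsIso (projFanAt o p X 1) := by
  refine ⟨finPow.eval _ 1 0, ?_, finPow.hom_ext fun k => ?_⟩
  · rw [projFanAt_eq_lift, finPow.lift_eval, hp, X.map_id]
  · obtain rfl : k = 0 := Fin.ext (Nat.lt_one_iff.mp k.isLt)
    rw [Category.assoc, projFanAt_eq_lift, finPow.lift_eval, hp, X.map_id]
    rfl

theorem IsStrictAt.isIso_projFanAt {X : C ⥤ SSet} (hX : IsStrictAt o p X)
    (hp : ∀ k, p 1 k = 𝟙 (o 1)) (n : ℕ+) : IsIso (projFanAt o p X n) := by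
  rcases (one_le : 1 ≤ n).lt_or_eq with h | rfl
  · exact hX n h
  · exact isIso_projFanAt_one hp X

theorem app_comp_projFanAt {W Z : C ⥤ SSet} (t : W ⟶ Z) (n : ℕ+) :
    t.app (o n) ≫ projFanAt o p Z n = finPow.lift fun k => W.map (p n k) ≫ t.app (o 1) :=
  finPow.hom_ext fun k => by
    rw [Category.assoc, projFanAt_eq_lift, finPow.lift_eval, finPow.lift_eval, t.naturality]

end ProjFan

theorem projPath_one (G : GenData) (k : Fin ((1 : ℕ+) : ℕ)) :
    projPath G 1 k = 𝟙 (FreeST.of G 1) := by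
  rw [projPath, dif_neg (by norm_num)]
  rfl

theorem projPath_of_one_lt (G : GenData) {n : ℕ+} (h : 1 < (n : ℕ)) (k : Fin n) :
    projPath G n k = (projArr G h k).toPath := by
  rw [projPath, dif_pos h]

section StrictPAlgebra

universe u

local notation "[" n "]" => FreeST.of emptyGen n

local notation "fan" => projFanAt (FreeST.of emptyGen) (projPath emptyGen)

variable {W Z : PCat ⥤ SSet.{u}}

def extendFromOneApp [∀ n, IsIso (fan Z n)] (u : W.obj [1] ⟶ Z.obj [1]) (n : ℕ+) :
    W.obj [n] ⟶ Z.obj [n] :=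
  (finPow.lift fun k => W.map (projPath emptyGen n k) ≫ u) ≫ inv (fan Z n)

theorem extendFromOneApp_one [∀ n, IsIso (fan Z n)] (u : W.obj [1] ⟶ Z.obj [1]) :
    extendFromOneApp u 1 = u := by
  have hlift : (finPow.lift fun k => W.map (projPath emptyGen 1 k) ≫ u) = u ≫ fan Z 1 :=
    finPow.hom_ext fun k => by
      rw [finPow.lift_eval, Category.assoc, projFanAt_eq_lift, finPow.lift_eval, projPath_one,
        W.map_id, Z.map_id, Category.id_comp, Category.comp_id]
  rw [extendFromOneApp, hlift, Category.assoc, IsIso.hom_inv_id, Category.comp_id]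

theorem extendFromOneApp_comp_map_projPath [∀ n, IsIso (fan Z n)] (u : W.obj [1] ⟶ Z.obj [1])
    (n : ℕ+) (k : Fin n) :
    extendFromOneApp u n ≫ Z.map (projPath emptyGen n k) = W.map (projPath emptyGen n k) ≫ u := by
  have hfan : Z.map (projPath emptyGen n k) = fan Z n ≫ finPow.eval _ n k := rfl
  rw [extendFromOneApp, hfan, Category.assoc, IsIso.inv_hom_id_assoc, finPow.lift_eval]

def extendFromOne [∀ n, IsIso (fan Z n)] (u : W.obj [1] ⟶ Z.obj [1]) : W ⟶ Z :=
  Paths.liftNatTrans (fun c => extendFromOneApp u c.val) <| by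
    rintro ⟨n⟩ ⟨_⟩ (⟨⟨⟩⟩ | ⟨h, k⟩)
    change W.map (projArr emptyGen h k).toPath ≫ extendFromOneApp u 1 =
      extendFromOneApp u n ≫ Z.map (projArr emptyGen h k).toPath
    rw [← projPath_of_one_lt, extendFromOneApp_one, extendFromOneApp_comp_map_projPath]

def homEquivOfIsIsoProjFan [∀ n, IsIso (fan Z n)] : (W ⟶ Z) ≃ (W.obj [1] ⟶ Z.obj [1]) where
  toFun t := t.app [1]
  invFun := extendFromOne
  left_inv t := by
    ext1
    funext c
    exact (IsIso.comp_inv_eq _).2 (app_comp_projFanAt t c.val).symm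
  right_inv := extendFromOneApp_one

def mapCxIsoOfIsIsoProjFan (X Z : PCat ⥤ SSet) [∀ n, IsIso (fan Z n)] :
    MapCx X Z ≅ sMap (X.obj [1]) (Z.obj [1]) :=
  NatIso.ofComponents (fun m => (homEquivOfIsIsoProjFan (W := prodConst X (stdS m))).toIso)
    fun _ => rfl

end StrictPAlgebra

theorem mapping_complex_of_strict_P_algebra :
    ∃ e : ∀ (X Z : PCat ⥤ SSet),
        IsStrictAt (FreeST.of emptyGen) (projPath emptyGen) Z →
        (MapCx X Z ≅ sMap (X.obj (FreeST.of emptyGen 1)) (Z.obj (FreeST.of emptyGen 1))),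
      (∀ (X X' Z : PCat ⥤ SSet)
          (hZ : IsStrictAt (FreeST.of emptyGen) (projPath emptyGen) Z) (f : X' ⟶ X),
        MapCx.pre f Z ≫ (e X' Z hZ).hom =
          (e X Z hZ).hom ≫ sMap.pre (f.app (FreeST.of emptyGen 1)) _) ∧
      (∀ (X Z Z' : PCat ⥤ SSet)
          (hZ : IsStrictAt (FreeST.of emptyGen) (projPath emptyGen) Z)
          (hZ' : IsStrictAt (FreeST.of emptyGen) (projPath emptyGen) Z') (g : Z ⟶ Z'),
        MapCx.post X g ≫ (e X Z' hZ').hom =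
          (e X Z hZ).hom ≫ sMap.post _ (g.app (FreeST.of emptyGen 1))) := by
  exact ⟨fun X Z hZ =>
    have := hZ.isIso_projFanAt (projPath_one emptyGen)
    mapCxIsoOfIsIsoProjFan X Z, fun _ _ _ _ _ => rfl, fun _ _ _ _ _ _ => rfl⟩

end SemiThPaper
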